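/- arXiv:quant-ph/9904066 — 5 statements merged into one kernel-verified Lean document; each statement's English description precedes it below -/
import Mathlib

section
/- Let k ≥ 2, let M be a real orthogonal k×k matrix, let v ∈ ℝ^k be its first column (so v is a unit vector), let T be the k×(k−1) matrix consisting of the remaining k−1 columns of M, and let R = v v^T be the k×k matrix with entries R_{ij} = v_i v_j. Then the (2k−1)×(2k−1) block matrix [[R, T], [T^T, 0]] (with R in the top-left k×k block, T in the top-right k×(k−1) block, T^T in the bottom-left (k−1)×k block, and the zero (k−1)×(k−1) matrix in the bottom-right block) is orthogonal. -/
/-- If `M` is a real orthogonal `k × k` matrix (`k ≥ 2`), `v` its first column,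
`T` the matrix of the remaining `k - 1` columns and `R = v vᵀ`, then the block
matrix `[[R, T], [Tᵀ, 0]]` is orthogonal. -/
theorem stmt_1 (k : ℕ) (hk : 2 ≤ k) (M : Matrix (Fin k) (Fin k) ℝ)
    (hM : M.transpose * M = 1)
    (v : Fin k → ℝ) (hv : ∀ i, v i = M i ⟨0, by omega⟩)
    (T : Matrix (Fin k) (Fin (k - 1)) ℝ)
    (hT : ∀ i j, T i j = M i ⟨(j : ℕ) + 1, by omega⟩)
    (R : Matrix (Fin k) (Fin k) ℝ) (hR : ∀ i j, R i j = v i * v j) :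
    (Matrix.fromBlocks R T T.transpose 0).transpose *
      Matrix.fromBlocks R T T.transpose 0 = 1 := by
  obtain ⟨n, rfl⟩ : ∃ n, k = n + 1 := ⟨k - 1, by omega⟩
  have hM' : M * M.transpose = 1 := mul_eq_one_comm.mp hM
  have hcol : ∀ a b, (∑ l, M l a * M l b) = if a = b then 1 else 0 := by
    intro a b
    have := congrFun (congrFun hM a) b
    simpa [Matrix.mul_apply, Matrix.one_apply] using this
  have hrow : ∀ a b, (∑ l, M a l * M b l) = if a = b then 1 else 0 := by
    intro a b
    have := congrFun (congrFun hM' a) b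
    simpa [Matrix.mul_apply, Matrix.one_apply] using this
  have z : Fin (n + 1) := ⟨0, by omega⟩
  have hTT : T.transpose * T = 1 := by
    ext j j'
    simp only [Matrix.mul_apply, Matrix.transpose_apply, Matrix.one_apply, hT]
    rw [hcol]
    simp [Fin.ext_iff]
  have hTR : T.transpose * R = 0 := by
    ext j i
    simp only [Matrix.mul_apply, Matrix.transpose_apply, hT, hR, hv,
      Matrix.zero_apply, ← mul_assoc]
    rw [← Finset.sum_mul, hcol]
    simp [Fin.ext_iff]
  have hRT : R.transpose * T = 0 := by
    ext i j
    simp only [Matrix.mul_apply, Matrix.transpose_apply, hT, hR, hv,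
      Matrix.zero_apply]
    have : ∀ l, M l ⟨0, by omega⟩ * M i ⟨0, by omega⟩ * M l ⟨(j:ℕ)+1, by omega⟩
        = (M l ⟨0, by omega⟩ * M l ⟨(j:ℕ)+1, by omega⟩) * M i ⟨0, by omega⟩ := by
      intro l; ring
    rw [Finset.sum_congr rfl fun l _ => this l, ← Finset.sum_mul, hcol]
    simp [Fin.ext_iff]
  have hRR : R.transpose * R + T * T.transpose = 1 := by
    ext i j
    simp only [Matrix.add_apply, Matrix.mul_apply, Matrix.transpose_apply,
      hT, hR, hv]
    have e1 : ∀ l, M l ⟨0, by omega⟩ * M i ⟨0, by omega⟩ *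
        (M l ⟨0, by omega⟩ * M j ⟨0, by omega⟩)
        = (M l ⟨0, by omega⟩ * M l ⟨0, by omega⟩) *
          (M i ⟨0, by omega⟩ * M j ⟨0, by omega⟩) := by intro l; ring
    rw [Finset.sum_congr rfl fun l _ => e1 l, ← Finset.sum_mul, hcol]
    simp only [if_true, eq_self_iff_true, if_pos rfl, one_mul]
    have := hrow i j
    rw [Fin.sum_univ_succ] at this
    have h0 : (0 : Fin (n+1)) = ⟨0, by omega⟩ := rfl
    rw [h0] at this
    have hs : (∑ l : Fin n, M i l.succ * M j l.succ)
        = ∑ l : Fin (n + 1 - 1), M i ⟨(l:ℕ)+1, by omega⟩ * M j ⟨(l:ℕ)+1, by omega⟩ := rfl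
    rw [hs] at this
    rw [this, Matrix.one_apply]
  rw [Matrix.fromBlocks_transpose, Matrix.fromBlocks_multiply,
    Matrix.transpose_transpose, Matrix.transpose_zero]
  rw [show (0 : Matrix (Fin (n+1-1)) (Fin (n+1-1)) ℝ) * T.transpose = 0 from by simp,
    show T * (0 : Matrix (Fin (n+1-1)) (Fin (n+1-1)) ℝ) = 0 from by simp,
    show (0 : Matrix (Fin (n+1-1)) (Fin (n+1-1)) ℝ) * 0 = 0 from by simp]
  rw [hRR, hTR, hRT, hTT]
  simp [Matrix.fromBlocks_one]
end

section
/- Let n ≥ 2 be an integer and let p ∈ (0,1) satisfy p^((n+1)/(n−1)) + p = 1. Define p_k = p^((k−1)/(n−1)) − p^(k/(n−1)) for 1 ≤ k ≤ n−1, and p_n = p. Then for all integers m, k with 1 ≤ m < k ≤ n, 1 − p·(p_k + ... + p_n)^2 / (p_m + ... + p_n)^2 ≥ p. -/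
/-!
The tails telescope: `P m + ⋯ + P n = p ^ ((m-1)/(n-1))`. Hence
`p (P k + ⋯ + P n)² / (P m + ⋯ + P n)² = p ^ (1 + 2(k-m)/(n-1))`, and since `k - m ≥ 1` and
`p ≤ 1` this is at most `p ^ ((n+1)/(n-1)) = 1 - p`.
-/

open Finset in
theorem Finset.sum_Icc_eq_of_telescope {M : Type*} [AddCommGroup M] {g P : ℕ → M} {m n : ℕ}
    (hmn : m ≤ n) (hP : ∀ k, m ≤ k → k < n → P k = g k - g (k + 1)) (hPn : P n = g n) :
    ∑ j ∈ Icc m n, P j = g m := by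
  have hIco : ∑ j ∈ Ico m n, P j = g m - g n := by
    rw [sum_congr rfl fun j hj => (hP j (mem_Ico.1 hj).1 (mem_Ico.1 hj).2).trans (neg_sub _ _).symm,
      sum_neg_distrib, sum_Ico_sub g hmn, neg_sub]
  rw [← Ico_insert_right hmn, sum_insert right_notMem_Ico, hIco, hPn, add_sub_cancel]

theorem Real.mul_sq_rpow_div_sq_rpow_le {p a b c : ℝ} (hp0 : 0 < p) (hp1 : p ≤ 1)
    (h : c ≤ 1 + 2 * (a - b)) : p * (p ^ a) ^ 2 / (p ^ b) ^ 2 ≤ p ^ c := by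
  have hsq (x : ℝ) : (p ^ x) ^ 2 = p ^ (2 * x) := by rw [mul_comm, rpow_mul hp0.le, rpow_two]
  calc p * (p ^ a) ^ 2 / (p ^ b) ^ 2 = p ^ (1 + 2 * (a - b)) := by
        rw [hsq, hsq, rpow_add hp0, rpow_one, mul_sub, rpow_sub hp0, mul_div_assoc]
    _ ≤ p ^ c := rpow_le_rpow_of_exponent_ge hp0 hp1 h

theorem stmt_6_general (n : ℕ) (p : ℝ) (hp : p ∈ Set.Ioo (0 : ℝ) 1)
    (hroot : p ^ (((n : ℝ) + 1) / ((n : ℝ) - 1)) + p = 1)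
    (P : ℕ → ℝ)
    (hP : ∀ k, 1 ≤ k → k ≤ n - 1 →
      P k = p ^ (((k : ℝ) - 1) / ((n : ℝ) - 1)) - p ^ ((k : ℝ) / ((n : ℝ) - 1)))
    (hPn : P n = p) :
    ∀ m k, 1 ≤ m → m < k → k ≤ n →
      1 - p * (∑ j ∈ Finset.Icc k n, P j) ^ 2 /
        (∑ j ∈ Finset.Icc m n, P j) ^ 2 ≥ p := by
  intro m k hm hmk hkn
  have hn : (1 : ℝ) < n := by exact_mod_cast (by omega : 1 < n)
  have htail : ∀ i, 1 ≤ i → i ≤ n →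
      ∑ j ∈ Finset.Icc i n, P j = p ^ (((i : ℝ) - 1) / ((n : ℝ) - 1)) := by
    intro i hi hin
    refine Finset.sum_Icc_eq_of_telescope (g := fun i : ℕ => p ^ (((i : ℝ) - 1) / ((n : ℝ) - 1)))
      hin (fun j hij hjn => ?_) ?_
    · rw [hP j (by omega) (by omega)]
      push_cast
      ring_nf
    · rw [hPn, div_self (by linarith), Real.rpow_one]
  have hexp : ((n : ℝ) + 1) / ((n : ℝ) - 1) ≤
      1 + 2 * (((k : ℝ) - 1) / ((n : ℝ) - 1) - ((m : ℝ) - 1) / ((n : ℝ) - 1)) := by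
    have hmk' : (m : ℝ) + 1 ≤ k := by exact_mod_cast hmk
    rw [← sub_div, ← mul_div_assoc, one_add_div (by linarith),
      div_le_div_iff_of_pos_right (by linarith)]
    linarith
  rw [htail k (by omega) hkn, htail m hm (by omega)]
  linarith [Real.mul_sq_rpow_div_sq_rpow_le hp.1 hp.2.le hexp]

/-- With `n ≥ 2`, `p ∈ (0,1)`, `p ^ ((n+1)/(n-1)) + p = 1`, and
`P k = p ^ ((k-1)/(n-1)) - p ^ (k/(n-1))` for `1 ≤ k ≤ n-1`, `P n = p`,
for all `1 ≤ m < k ≤ n` we have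
`1 - p (P k + ⋯ + P n)² / (P m + ⋯ + P n)² ≥ p`. -/
theorem stmt_6 (n : ℕ) (hn : 2 ≤ n) (p : ℝ) (hp : p ∈ Set.Ioo (0 : ℝ) 1)
    (hroot : p ^ (((n : ℝ) + 1) / ((n : ℝ) - 1)) + p = 1)
    (P : ℕ → ℝ)
    (hP : ∀ k, 1 ≤ k → k ≤ n - 1 →
      P k = p ^ (((k : ℝ) - 1) / ((n : ℝ) - 1)) - p ^ ((k : ℝ) / ((n : ℝ) - 1)))
    (hPn : P n = p) :
    ∀ m k, 1 ≤ m → m < k → k ≤ n →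
      1 - p * (∑ j ∈ Finset.Icc k n, P j) ^ 2 /
        (∑ j ∈ Finset.Icc m n, P j) ^ 2 ≥ p :=
  stmt_6_general n p hp hroot P hP hPn
end

section
/- There exist positive real constants c and C such that for every integer n ≥ 2, the unique root p of the equation p^((n+1)/(n−1)) + p = 1 in the interval [1/2, 1] satisfies 1/2 + c/n ≤ p ≤ 1/2 + C/n. -/
/-- There are constants `0 < c`, `0 < C` such that for every `n ≥ 2`, any root
`p ∈ [1/2, 1]` of `p ^ ((n+1)/(n-1)) + p = 1` satisfies
`1/2 + c/n ≤ p ≤ 1/2 + C/n`. -/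
theorem stmt_7 :
    ∃ c C : ℝ, 0 < c ∧ 0 < C ∧
      ∀ n : ℕ, 2 ≤ n → ∀ p : ℝ, p ∈ Set.Icc (1/2 : ℝ) 1 →
        p ^ (((n : ℝ) + 1) / ((n : ℝ) - 1)) + p = 1 →
        1/2 + c / n ≤ p ∧ p ≤ 1/2 + C / n := by
  refine ⟨1/64, 2, by norm_num, by norm_num, ?_⟩
  intro n hn p hp heq
  obtain ⟨hp1, hp2⟩ := hp
  have hn2 : (2:ℝ) ≤ (n:ℝ) := by exact_mod_cast hn
  have hn0 : (0:ℝ) < (n:ℝ) - 1 := by linarith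
  have hnpos : (0:ℝ) < (n:ℝ) := by linarith
  have hp0 : (0:ℝ) < p := by linarith
  obtain ⟨α, hαdef⟩ : ∃ a : ℝ, a = ((n:ℝ)+1)/((n:ℝ)-1) := ⟨_, rfl⟩
  rw [← hαdef] at heq
  have hα1 : 1 < α := by rw [hαdef, lt_div_iff₀ hn0]; linarith
  have hα3 : α ≤ 3 := by rw [hαdef, div_le_iff₀ hn0]; linarith
  have hαm : α - 1 = 2 / ((n:ℝ)-1) := by
    rw [hαdef]; field_simp; ring
  have hlogp : Real.log p ≤ 0 := Real.log_nonpos (le_of_lt hp0) hp2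
  have key : p ^ α = p * Real.exp ((α - 1) * Real.log p) := by
    conv_lhs => rw [Real.rpow_def_of_pos hp0]
    rw [show Real.log p * α = Real.log p + (α-1)*Real.log p by ring,
        Real.exp_add, Real.exp_log hp0]
  -- Step A : p ≤ 7/8
  have hpow3 : (1/8 : ℝ) ≤ p ^ α := by
    have h1 : p ^ (3:ℝ) ≤ p ^ α := Real.rpow_le_rpow_of_exponent_ge hp0 hp2 hα3
    have h2 : (1/2:ℝ) ^ (3:ℝ) ≤ p ^ (3:ℝ) :=
      Real.rpow_le_rpow (by norm_num) hp1 (by norm_num)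
    have h3 : (1/2:ℝ) ^ (3:ℝ) = 1/8 := by
      rw [show (3:ℝ) = ((3:ℕ):ℝ) by norm_num, Real.rpow_natCast]; norm_num
    linarith
  have hp78 : p ≤ 7/8 := by linarith
  -- log bounds
  have hlog2 : Real.log 2 ≤ 1 := by
    have := Real.log_le_sub_one_of_pos (by norm_num : (0:ℝ) < 2); linarith
  have hlogp_lb : -Real.log 2 ≤ Real.log p := by
    have h := Real.log_le_log (by norm_num : (0:ℝ) < 1/2) hp1
    rw [show (1/2:ℝ) = 2⁻¹ by norm_num, Real.log_inv] at h
    linarith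
  have hplogp : -Real.log 2 ≤ p * Real.log p := by
    have h : 0 ≤ (1-p) * (-Real.log p) := mul_nonneg (by linarith) (by linarith)
    nlinarith
  -- Step B : upper bound
  have hub : p ≤ 1/2 + 2 / (n:ℝ) := by
    have hexp : (α-1)*Real.log p + 1 ≤ Real.exp ((α-1)*Real.log p) :=
      Real.add_one_le_exp _
    have h1 : p * ((α-1)*Real.log p + 1) ≤ p ^ α := by
      rw [key]; exact mul_le_mul_of_nonneg_left hexp (le_of_lt hp0)
    have h2 : p + (α-1) * (p * Real.log p) ≤ p ^ α := by nlinarith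
    have h3 : (α-1) * (-Real.log 2) ≤ (α-1) * (p * Real.log p) :=
      mul_le_mul_of_nonneg_left hplogp (by linarith)
    have h4 : 2*p ≤ 1 + 2 / ((n:ℝ)-1) := by rw [← hαm]; nlinarith
    have h5 : 2 / ((n:ℝ)-1) ≤ 4 / (n:ℝ) := by
      rw [div_le_div_iff₀ hn0 hnpos]; linarith
    have h6 : (4:ℝ)/(n:ℝ) = 2*(2/(n:ℝ)) := by ring
    linarith
  -- Step C : lower bound
  have hlb : 1/2 + (1/64) / (n:ℝ) ≤ p := by
    obtain ⟨x, hxdef⟩ : ∃ a : ℝ, a = (α-1)*Real.log p := ⟨_, rfl⟩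
    have hx0 : x ≤ 0 := hxdef ▸ mul_nonpos_of_nonneg_of_nonpos (by linarith) hlogp
    have hexpx : Real.exp x * (1 - x) ≤ 1 := by
      have hmul : Real.exp x * Real.exp (-x) = 1 := by
        rw [← Real.exp_add]; simp
      have h := Real.add_one_le_exp (-x)
      calc Real.exp x * (1 - x) ≤ Real.exp x * Real.exp (-x) :=
            mul_le_mul_of_nonneg_left (by linarith) (Real.exp_pos x).le
        _ = 1 := hmul
    have hprod : (1 - p) * (1 - x) ≤ p := by
      have h1 : (1-p) = p * Real.exp x := by rw [hxdef, ← key]; linarith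
      calc (1-p)*(1-x) = p * (Real.exp x * (1-x)) := by rw [h1]; ring
        _ ≤ p * 1 := mul_le_mul_of_nonneg_left hexpx hp0.le
        _ = p := mul_one p
    -- -log p ≥ log (8/7) ≥ 1/8
    have h87 : (1/8:ℝ) ≤ Real.log (8/7) := by
      have h1 : (7/8:ℝ) ≤ Real.exp (-(1/8)) := by
        have := Real.add_one_le_exp (-(1/8:ℝ)); linarith
      have hmul : Real.exp (1/8:ℝ) * Real.exp (-(1/8:ℝ)) = 1 := by
        rw [← Real.exp_add]; simp
      have h2 : Real.exp (1/8:ℝ) ≤ 8/7 := by nlinarith [Real.exp_pos (1/8:ℝ)]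
      exact (Real.le_log_iff_exp_le (by norm_num)).2 h2
    have hlogp78 : Real.log p ≤ -(1/8) := by
      have h := Real.log_le_log hp0 hp78
      rw [show (7/8:ℝ) = (8/7)⁻¹ by norm_num, Real.log_inv] at h
      linarith
    obtain ⟨t, htdef⟩ : ∃ a : ℝ, a = 2 / ((n:ℝ)-1) := ⟨_, rfl⟩
    have ht : 0 < t := by rw [htdef]; positivity
    have ha : t * (1/8) ≤ -x := by
      have : -x = t * (-Real.log p) := by rw [hxdef, htdef, hαm]; ring
      rw [this]
      exact mul_le_mul_of_nonneg_left (by linarith) ht.le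
    have hnx : (1/8) * (t * (1/8)) ≤ (1-p) * (-x) :=
      mul_le_mul (by linarith) ha (by positivity) (by linarith)
    have hexpand : (1-p)*(1-x) = (1-p) + (1-p)*(-x) := by ring
    have hnx' : (1/8:ℝ) * (t * (1/8)) = t * (1/64) := by ring
    have h2p : 1 + t * (1/64) ≤ 2*p := by linarith
    have hfin : (1/64:ℝ) / (n:ℝ) ≤ t * (1/128) := by
      have h1 : t * (1/128) = (1/64) / ((n:ℝ)-1) := by rw [htdef]; ring
      rw [h1, div_le_div_iff₀ hnpos hn0]; linarith
    linarith
  exact ⟨hlb, hub⟩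
end

section
/- For each integer n ≥ 2, let p_n denote the unique root of the equation p^((n+1)/(n−1)) + p = 1 in the interval [1/2, 1]. Then the sequence (p_n) converges to 1/2 as n tends to infinity. -/
/-! Since `p ≥ 1/2` and the exponent `e` is nonnegative, the equation gives
`p = 1 - p ^ e ≤ 1 - (1/2) ^ e`. As `e = (n+1)/(n-1) → 1`, the upper bound tends to `1/2`,
and `p` is squeezed. -/

open Filter Topology

theorem tendsto_natCast_add_one_div_natCast_sub_one :
    Tendsto (fun n : ℕ ↦ ((n : ℝ) + 1) / ((n : ℝ) - 1)) atTop (𝓝 1) := by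
  simpa [add_comm, sub_eq_neg_add] using
    tendsto_add_mul_div_add_mul_atTop_nhds (1 : ℝ) (-1) 1 one_ne_zero

theorem tendsto_one_sub_half_rpow_natCast_add_one_div_natCast_sub_one :
    Tendsto (fun n : ℕ ↦ 1 - (1 / 2 : ℝ) ^ (((n : ℝ) + 1) / ((n : ℝ) - 1))) atTop (𝓝 (1 / 2)) := by
  have hcont : ContinuousAt (fun e : ℝ ↦ 1 - (1 / 2 : ℝ) ^ e) 1 :=
    continuousAt_const.sub (Real.continuousAt_const_rpow (by norm_num))
  have hlim : (1 : ℝ) - (1 / 2) ^ (1 : ℝ) = 1 / 2 := by norm_num [Real.rpow_one]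
  simpa only [hlim, Function.comp_def] using
    hcont.tendsto.comp tendsto_natCast_add_one_div_natCast_sub_one

theorem le_one_sub_rpow_of_rpow_add_eq_one {a x e : ℝ} (ha : 0 ≤ a) (hax : a ≤ x) (he : 0 ≤ e)
    (h : x ^ e + x = 1) : x ≤ 1 - a ^ e := by
  have : a ^ e ≤ x ^ e := Real.rpow_le_rpow ha hax he
  linarith

/-- If for each `n ≥ 2`, `p n` is the root of `x ^ ((n+1)/(n-1)) + x = 1` in
`[1/2, 1]`, then `p n → 1/2` as `n → ∞`. -/
theorem stmt_8 (p : ℕ → ℝ)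
    (hp : ∀ n : ℕ, 2 ≤ n → p n ∈ Set.Icc (1/2 : ℝ) 1 ∧
      (p n) ^ (((n : ℝ) + 1) / ((n : ℝ) - 1)) + p n = 1) :
    Filter.Tendsto p Filter.atTop (nhds (1/2 : ℝ)) := by
  refine tendsto_of_tendsto_of_tendsto_of_le_of_le' tendsto_const_nhds
    tendsto_one_sub_half_rpow_natCast_add_one_div_natCast_sub_one ?_ ?_
  · filter_upwards [eventually_ge_atTop 2] with n hn using (hp n hn).1.1
  · filter_upwards [eventually_ge_atTop 2] with n hn
    obtain ⟨⟨hlow, -⟩, hroot⟩ := hp n hn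
    have hn' : (2 : ℝ) ≤ n := by exact_mod_cast hn
    exact le_one_sub_rpow_of_rpow_add_eq_one (by norm_num) hlow
      (div_nonneg (by linarith) (by linarith)) hroot
end

section
/- Let H be a finite-dimensional real inner product space and let A : H → H be a linear map that is a contraction, i.e., ‖A ψ‖ ≤ ‖ψ‖ for all ψ ∈ H. Then there exist linear subspaces E₁ and E₂ of H such that H is the (internal) direct sum of E₁ and E₂ (E₁ ∩ E₂ = {0} and E₁ + E₂ = H), and: (i) A maps E₁ into E₁ and ‖A ψ‖ = ‖ψ‖ for every ψ ∈ E₁; (ii) for every ψ ∈ E₂, ‖A^k ψ‖ → 0 as k → ∞. -/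
/-!
Let `E₁` be the set of vectors at which every power of `A` preserves the norm. A contraction
preserves inner products with any vector whose norm it preserves, so `E₁` is a subspace, `A` is an
isometry of `E₁` and hence, in finite dimension, maps `E₁` onto itself; consequently `E₁ᗮ` is
`A`-invariant. For `χ ∈ E₁ᗮ` the norms `‖A^k χ‖` decrease to some `L`, and by compactness a
subsequence of the orbit converges to some `φ ∈ E₁ᗮ` at which every power of `A` has norm `L`.
Thus `φ ∈ E₁ ⊓ E₁ᗮ = 0`, and `L = ‖φ‖ = 0`.
-/

open Filter Topology
open scoped RealInnerProductSpace

section Contraction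

variable {E F : Type*} [NormedAddCommGroup E] [InnerProductSpace ℝ E]
  [NormedAddCommGroup F] [InnerProductSpace ℝ F]

/-- `t ↦ ‖x + t • y‖² - ‖T (x + t • y)‖²` is a nonnegative quadratic vanishing at `t = 0`,
so its linear coefficient vanishes. -/
theorem inner_map_map_of_norm_map_eq {T : E →ₗ[ℝ] F} (hT : ∀ x, ‖T x‖ ≤ ‖x‖) {x : E}
    (hx : ‖T x‖ = ‖x‖) (y : E) : ⟪T x, T y⟫ = ⟪x, y⟫ := by
  have hquad : ∀ t : ℝ,
      0 ≤ (‖y‖ ^ 2 - ‖T y‖ ^ 2) * (t * t) + 2 * (⟪x, y⟫ - ⟪T x, T y⟫) * t + 0 := by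
    intro t
    have h := pow_le_pow_left₀ (norm_nonneg _) (hT (x + t • y)) 2
    rw [map_add, map_smul, norm_add_sq_real, norm_add_sq_real, inner_smul_right,
      inner_smul_right, norm_smul, norm_smul, hx, Real.norm_eq_abs] at h
    nlinarith [sq_abs t]
  have := discrim_le_zero hquad
  rw [discrim] at this
  nlinarith [sq_nonneg (⟪x, y⟫ - ⟪T x, T y⟫)]

end Contraction

namespace LinearMap

variable {H : Type*} [NormedAddCommGroup H] [InnerProductSpace ℝ H] (A : H →ₗ[ℝ] H)

theorem antitone_norm_pow_apply (hA : ∀ ψ, ‖A ψ‖ ≤ ‖ψ‖) (ψ : H) :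
    Antitone fun k => ‖(A ^ k) ψ‖ :=
  antitone_nat_of_succ_le fun k => by
    rw [pow_succ', Module.End.mul_apply]
    exact hA _

theorem norm_pow_apply_le (hA : ∀ ψ, ‖A ψ‖ ≤ ‖ψ‖) (k : ℕ) (ψ : H) : ‖(A ^ k) ψ‖ ≤ ‖ψ‖ := by
  simpa using A.antitone_norm_pow_apply hA ψ k.zero_le

theorem tendsto_norm_pow_apply_iInf (hA : ∀ ψ, ‖A ψ‖ ≤ ‖ψ‖) (ψ : H) :
    Tendsto (fun k => ‖(A ^ k) ψ‖) atTop (𝓝 (⨅ k, ‖(A ^ k) ψ‖)) :=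
  tendsto_atTop_ciInf (A.antitone_norm_pow_apply hA ψ) ⟨0, by
    rintro _ ⟨k, rfl⟩
    exact norm_nonneg _⟩

/-- For a contraction this is the set of vectors on which every power of `A` is isometric
(`mem_isometricPart_iff`); the inner-product form makes it a submodule for any `A`. -/
def isometricPart : Submodule ℝ H where
  carrier := {ψ | ∀ k χ, ⟪(A ^ k) ψ, (A ^ k) χ⟫ = ⟪ψ, χ⟫}
  zero_mem' := by simp
  add_mem' {x y} hx hy k χ := by simp only [map_add, inner_add_left, hx k χ, hy k χ]
  smul_mem' c x hx k χ := by simp only [map_smul, inner_smul_left, hx k χ]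

theorem norm_pow_apply_of_mem_isometricPart {ψ : H} (hψ : ψ ∈ A.isometricPart) (k : ℕ) :
    ‖(A ^ k) ψ‖ = ‖ψ‖ := by
  have h := hψ k ψ
  rw [real_inner_self_eq_norm_sq, real_inner_self_eq_norm_sq] at h
  exact (pow_left_inj₀ (norm_nonneg _) (norm_nonneg _) two_ne_zero).mp h

theorem mem_isometricPart_iff (hA : ∀ ψ, ‖A ψ‖ ≤ ‖ψ‖) {ψ : H} :
    ψ ∈ A.isometricPart ↔ ∀ k, ‖(A ^ k) ψ‖ = ‖ψ‖ :=
  ⟨A.norm_pow_apply_of_mem_isometricPart, fun h k χ =>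
    inner_map_map_of_norm_map_eq (A.norm_pow_apply_le hA k) (h k) χ⟩

theorem map_mem_isometricPart (hA : ∀ ψ, ‖A ψ‖ ≤ ‖ψ‖) {ψ : H} (hψ : ψ ∈ A.isometricPart) :
    A ψ ∈ A.isometricPart := by
  rw [mem_isometricPart_iff A hA] at hψ ⊢
  intro k
  rw [← Module.End.mul_apply, ← pow_succ, hψ, ← pow_one A, hψ]

variable [FiniteDimensional ℝ H]

theorem map_mem_orthogonal_isometricPart (hA : ∀ ψ, ‖A ψ‖ ≤ ‖ψ‖) {χ : H}
    (hχ : χ ∈ A.isometricPartᗮ) : A χ ∈ A.isometricPartᗮ := by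
  set B := A.restrict fun _ => A.map_mem_isometricPart hA
  have hB : Function.Surjective B := by
    refine LinearMap.injective_iff_surjective.mp (LinearMap.ker_eq_bot.mp
      (LinearMap.ker_eq_bot'.mpr fun ψ h => ?_))
    have hAψ : A ψ = 0 := congrArg Subtype.val h
    rw [← norm_eq_zero, ← Submodule.norm_coe, ← A.norm_pow_apply_of_mem_isometricPart ψ.2 1,
      pow_one, hAψ, norm_zero]
  intro φ hφ
  obtain ⟨ψ, hψ⟩ := hB ⟨φ, hφ⟩
  obtain rfl : A ψ = φ := congrArg Subtype.val hψ
  simpa using (ψ.2 1 χ).trans (hχ ψ ψ.2)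

theorem norm_pow_apply_of_tendsto (hA : ∀ ψ, ‖A ψ‖ ≤ ‖ψ‖) {c : ℕ → ℕ}
    (hc : Tendsto c atTop atTop) {ψ φ : H} (hφ : Tendsto (fun n => (A ^ c n) ψ) atTop (𝓝 φ))
    (m : ℕ) : ‖(A ^ m) φ‖ = ⨅ k, ‖(A ^ k) ψ‖ := by
  have hshift : Tendsto (fun n => ‖(A ^ m) ((A ^ c n) ψ)‖) atTop (𝓝 (⨅ k, ‖(A ^ k) ψ‖)) := by
    simp only [← Module.End.mul_apply, ← pow_add]
    exact (A.tendsto_norm_pow_apply_iInf hA ψ).comp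
      (tendsto_atTop_mono (fun n => Nat.le_add_left (c n) m) hc)
  have hcont : Continuous (A ^ m) := LinearMap.continuous_of_finiteDimensional _
  exact tendsto_nhds_unique ((hcont.tendsto φ).comp hφ).norm hshift

theorem tendsto_norm_pow_apply_zero (hA : ∀ ψ, ‖A ψ‖ ≤ ‖ψ‖) {V : Submodule ℝ H}
    (hVA : ∀ χ ∈ V, A χ ∈ V) (hV : Disjoint V A.isometricPart) {χ : H} (hχ : χ ∈ V) :
    Tendsto (fun k => ‖(A ^ k) χ‖) atTop (𝓝 0) := by
  obtain ⟨φ, -, c, hc, hφ⟩ := (isCompact_closedBall (0 : H) ‖χ‖).tendsto_subseq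
    (x := fun k => (A ^ k) χ) fun k => mem_closedBall_zero_iff.mpr (A.norm_pow_apply_le hA k χ)
  have hφV : φ ∈ V := V.closed_of_finiteDimensional.mem_of_tendsto hφ
    (Eventually.of_forall fun n => Module.End.pow_apply_mem_of_forall_mem _ hVA χ hχ)
  have hnorm := A.norm_pow_apply_of_tendsto hA hc.tendsto_atTop hφ
  have hφ1 : φ ∈ A.isometricPart := (A.mem_isometricPart_iff hA).mpr fun k => by
    rw [hnorm k, ← hnorm 0, pow_zero, Module.End.one_apply]
  have hφ0 : φ = 0 := (Submodule.disjoint_def.mp hV) φ hφV hφ1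
  simpa [← hnorm 0, hφ0] using A.tendsto_norm_pow_apply_iInf hA χ

end LinearMap

/-- For a contraction `A` on a finite-dimensional real inner product space `H`,
`H` splits as a direct sum `E₁ ⊕ E₂` where `A` maps `E₁` isometrically into
`E₁`, and `‖A^k ψ‖ → 0` for every `ψ ∈ E₂`. -/
theorem stmt_11 (H : Type*) [NormedAddCommGroup H] [InnerProductSpace ℝ H]
    [FiniteDimensional ℝ H] (A : H →ₗ[ℝ] H) (hA : ∀ ψ : H, ‖A ψ‖ ≤ ‖ψ‖) :
    ∃ E₁ E₂ : Submodule ℝ H,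
      E₁ ⊓ E₂ = ⊥ ∧ E₁ ⊔ E₂ = ⊤ ∧
      (∀ ψ ∈ E₁, A ψ ∈ E₁ ∧ ‖A ψ‖ = ‖ψ‖) ∧
      (∀ ψ ∈ E₂,
        Filter.Tendsto (fun k : ℕ => ‖(A ^ k) ψ‖) Filter.atTop (nhds 0)) :=
  ⟨A.isometricPart, A.isometricPartᗮ, Submodule.inf_orthogonal_eq_bot _,
    Submodule.sup_orthogonal_of_hasOrthogonalProjection,
    fun _ hψ => ⟨A.map_mem_isometricPart hA hψ, by
      simpa using A.norm_pow_apply_of_mem_isometricPart hψ 1⟩,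
    fun _ => A.tendsto_norm_pow_apply_zero hA (fun _ => A.map_mem_orthogonal_isometricPart hA)
      (Submodule.orthogonal_disjoint _).symm⟩
end
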